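/- arXiv:2412.19598 — 5 statements merged into one kernel-verified Lean document; each statement's English description precedes it below -/
import Mathlib

section
/- If some point x° of the probability simplex X with all components strictly positive is efficient for VMAX Cx, then every point of X is efficient; conversely, if X_E = X then every such interior point is efficient. -/
open Finset

def probSimplex (n : ℕ) : Set (Fin n → ℝ) := {x | (∑ j, x j) = 1 ∧ ∀ j, 0 ≤ x j}

def Efficient {k n : ℕ} (C : Fin k → Fin n → ℝ) (x : Fin n → ℝ) : Prop :=
  x ∈ probSimplex n ∧
    ¬ ∃ y ∈ probSimplex n, (∀ i, ∑ j, C i j * x j ≤ ∑ j, C i j * y j) ∧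
      ∃ i, ∑ j, C i j * x j < ∑ j, C i j * y j

theorem stmt10 (n k : ℕ) (hn : 2 ≤ n) (hk : 2 ≤ k) (C : Fin k → Fin n → ℝ)
    (hES : ∀ x ∈ probSimplex n, Efficient C x ↔
      ∃ l : Fin k → ℝ, (∀ i, 0 < l i) ∧ ∀ y ∈ probSimplex n,
        ∑ j, (∑ i, l i * C i j) * y j ≤ ∑ j, (∑ i, l i * C i j) * x j) :
    ((∃ x ∈ probSimplex n, (∀ j, 0 < x j) ∧ Efficient C x) →
        ∀ x ∈ probSimplex n, Efficient C x) ∧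
      ((∀ x ∈ probSimplex n, Efficient C x) →
        ∀ x ∈ probSimplex n, (∀ j, 0 < x j) → Efficient C x) := by
  constructor
  · rintro ⟨xo, hxo, hpos, heff⟩ x hx
    obtain ⟨l, hl, hmax⟩ := (hES xo hxo).mp heff
    set d : Fin n → ℝ := fun j => ∑ i, l i * C i j with hd
    set S : ℝ := ∑ j, d j * xo j with hS
    -- vertices are in the simplex
    have hvert : ∀ j : Fin n, (fun m => if m = j then (1:ℝ) else 0) ∈ probSimplex n := by
      intro j
      refine ⟨by simp, fun m => by dsimp only; split <;> norm_num⟩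
    have hdle : ∀ j, d j ≤ S := by
      intro j
      have := hmax _ (hvert j)
      simpa [mul_ite] using this
    have hdeq : ∀ j, d j = S := by
      by_contra h
      push_neg at h
      obtain ⟨j0, hj0⟩ := h
      have hj0' : d j0 < S := lt_of_le_of_ne (hdle j0) hj0
      have hlt : ∑ j, d j * xo j < ∑ j, S * xo j := by
        apply Finset.sum_lt_sum (fun j _ => mul_le_mul_of_nonneg_right (hdle j) (hxo.2 j))
        exact ⟨j0, Finset.mem_univ j0, mul_lt_mul_of_pos_right hj0' (hpos j0)⟩
      rw [← Finset.mul_sum, hxo.1, mul_one] at hlt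
      exact lt_irrefl S hlt
    have hval : ∀ z : Fin n → ℝ, z ∈ probSimplex n → ∑ j, d j * z j = S := by
      intro z hz
      calc ∑ j, d j * z j = ∑ j, S * z j := by
            exact Finset.sum_congr rfl (fun j _ => by rw [hdeq j])
        _ = S := by rw [← Finset.mul_sum, hz.1, mul_one]
    refine (hES x hx).mpr ⟨l, hl, fun y hy => ?_⟩
    have h1 : ∑ j, d j * y j = S := hval y hy
    have h2 : ∑ j, d j * x j = S := hval x hx
    simp only [hd] at h1 h2
    rw [h1, h2]
  · intro h x hx _
    exact h x hx
end

section
/- Let x° be a point of the probability simplex whose positive components are exactly those indexed by J' with 2 ≤ |J'| ≤ n−1. Then x° is efficient for VMAX Cx if and only if every point of X whose positive components are exactly those indexed by J' is efficient. -/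
open Finset

theorem stmt11 (n k : ℕ) (hn : 3 ≤ n) (hk : 2 ≤ k) (C : Fin k → Fin n → ℝ)
    (hES : ∀ x ∈ probSimplex n, Efficient C x ↔
      ∃ l : Fin k → ℝ, (∀ i, 0 < l i) ∧ ∀ y ∈ probSimplex n,
        ∑ j, (∑ i, l i * C i j) * y j ≤ ∑ j, (∑ i, l i * C i j) * x j)
    (J' : Finset (Fin n)) (hJ : 2 ≤ J'.card) (hJ' : J'.card ≤ n - 1)
    (x : Fin n → ℝ) (hx : x ∈ probSimplex n) (hxJ : ∀ j, 0 < x j ↔ j ∈ J') :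
    Efficient C x ↔
      ∀ y ∈ probSimplex n, (∀ j, 0 < y j ↔ j ∈ J') → Efficient C y := by
  constructor
  · intro hxe y hy hyJ
    obtain ⟨l, hl, hmax⟩ := (hES x hx).mp hxe
    set w : Fin n → ℝ := fun j => ∑ i, l i * C i j with hw
    set S : ℝ := ∑ j, w j * x j with hS
    -- each coordinate value is at most S
    have hcoord : ∀ j0, w j0 ≤ S := by
      intro j0
      have he : (fun j => if j = j0 then (1:ℝ) else 0) ∈ probSimplex n := by
        constructor
        · simp
        · intro j; by_cases h : j = j0 <;> simp [h]
      have := hmax _ he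
      simpa [mul_ite] using this
    -- on J', w equals S
    have hWJ : ∀ j ∈ J', w j = S := by
      intro j0 hj0
      by_contra hne
      have hlt : w j0 < S := lt_of_le_of_ne (hcoord j0) hne
      have hxpos : 0 < x j0 := (hxJ j0).mpr hj0
      have : S < ∑ j, S * x j := by
        apply Finset.sum_lt_sum
        · intro j _
          exact mul_le_mul_of_nonneg_right (hcoord j) (hx.2 j)
        · exact ⟨j0, Finset.mem_univ j0, by nlinarith⟩
      rw [← Finset.mul_sum, hx.1, mul_one] at this
      exact lt_irrefl S this
    -- y attains the same value S
    have hyval : ∑ j, w j * y j = S := by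
      have : ∀ j, w j * y j = S * y j := by
        intro j
        by_cases h : j ∈ J'
        · rw [hWJ j h]
        · have : y j = 0 := le_antisymm (by
            by_contra hc
            exact h ((hyJ j).mp (not_le.mp hc))) (hy.2 j)
          simp [this]
      rw [Finset.sum_congr rfl (fun j _ => this j), ← Finset.mul_sum, hy.1, mul_one]
    exact (hES y hy).mpr ⟨l, hl, fun z hz => by rw [hyval]; exact hmax z hz⟩
  · intro h
    exact h x hx hxJ
end

section
/- Every point of the probability simplex X is efficient for VMAX Cx if and only if there exists λ ∈ ℝ^k with all positive components such that all n components of λ^T C are equal. -/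
open Finset

theorem stmt12 (n k : ℕ) (hn : 2 ≤ n) (hk : 2 ≤ k) (C : Fin k → Fin n → ℝ)
    (hES : ∀ x ∈ probSimplex n, Efficient C x ↔
      ∃ l : Fin k → ℝ, (∀ i, 0 < l i) ∧ ∀ y ∈ probSimplex n,
        ∑ j, (∑ i, l i * C i j) * y j ≤ ∑ j, (∑ i, l i * C i j) * x j) :
    (∀ x ∈ probSimplex n, Efficient C x) ↔
      ∃ l : Fin k → ℝ, (∀ i, 0 < l i) ∧
        ∀ j j' : Fin n, (∑ i, l i * C i j) = ∑ i, l i * C i j' := by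
  have hn0 : (0:ℝ) < n := by positivity
  constructor
  · intro hall
    -- use the uniform distribution
    set u : Fin n → ℝ := fun _ => 1 / n with hu
    have humem : u ∈ probSimplex n := by
      constructor
      · simp [hu, Finset.sum_const]
        field_simp
      · intro j; positivity
    obtain ⟨l, hlpos, hopt⟩ := (hES u humem).mp (hall u humem)
    refine ⟨l, hlpos, ?_⟩
    set d : Fin n → ℝ := fun j => ∑ i, l i * C i j with hd
    set S : ℝ := ∑ j, d j with hS
    -- each vertex gives d j ≤ S / n
    have hle : ∀ j' : Fin n, d j' ≤ S / n := by
      intro j'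
      set e : Fin n → ℝ := fun j => if j = j' then 1 else 0 with he
      have hemem : e ∈ probSimplex n := by
        constructor
        · simp [he]
        · intro j; by_cases h : j = j' <;> simp [he, h]
      have := hopt e hemem
      have hL : ∑ j, d j * e j = d j' := by
        simp [he, mul_ite, Finset.sum_ite_eq']
      have hR : ∑ j, d j * u j = S / n := by
        simp [hu, hS, div_eq_mul_inv, ← Finset.sum_mul]
      calc d j' = ∑ j, d j * e j := hL.symm
        _ ≤ ∑ j, d j * u j := this
        _ = S / n := hR
    have heq : ∀ j : Fin n, d j = S / n := by
      intro j0
      by_contra hne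
      have hlt : d j0 < S / n := lt_of_le_of_ne (hle j0) hne
      have : S < ∑ _j : Fin n, S / n :=
        Finset.sum_lt_sum (fun j _ => hle j) ⟨j0, Finset.mem_univ j0, hlt⟩
      rw [Finset.sum_const, Finset.card_univ, Fintype.card_fin, nsmul_eq_mul] at this
      rw [mul_div_cancel₀ S (ne_of_gt hn0)] at this
      exact lt_irrefl S this
    intro j j'
    show d j = d j'
    rw [heq j, heq j']
  · rintro ⟨l, hlpos, hcol⟩ x hx
    refine (hES x hx).mpr ⟨l, hlpos, ?_⟩
    intro y hy
    have j0 : Fin n := ⟨0, by omega⟩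
    set c : ℝ := ∑ i, l i * C i j0 with hc
    have hcj : ∀ j, (∑ i, l i * C i j) = c := fun j => hcol j j0
    have hsum : ∀ z : Fin n → ℝ, z ∈ probSimplex n →
        ∑ j, (∑ i, l i * C i j) * z j = c := by
      intro z hz
      calc ∑ j, (∑ i, l i * C i j) * z j = ∑ j, c * z j := by
            exact Finset.sum_congr rfl fun j _ => by rw [hcj j]
        _ = c * ∑ j, z j := by rw [Finset.mul_sum]
        _ = c := by rw [hz.1, mul_one]
    rw [hsum y hy, hsum x hx]
end

section
/- Consider the linear program T^0: maximize ε subject to (λ^T C)_j = (λ^T C)_{j+1} for j = 1,...,n−1, λ_i ≥ ε for all i, and ε ≤ 1. Then X_E = X if and only if T^0 has a feasible solution with ε > 0. -/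
/-!
Write `f = λᵀC` (`Matrix.vecMul l C`; `f ⬝ᵥ x` unfolds to the double sums of the statement).
If every point of the simplex is efficient, then so is the barycentre, so some `λ > 0` makes
the barycentre maximise `f ⬝ᵥ x` over the simplex; since `f ⬝ᵥ x` at the barycentre is the mean
of the `f j`, and no vertex can beat it, all `f j` are equal. Conversely, if `f` is constant for
some `λ > 0`, then `f ⬝ᵥ x` is constant on the simplex, so every point maximises it and is
efficient.
-/

open Finset

open Filter Topology

lemma Fin.eq_of_forall_succ_eq {α : Type*} {n : ℕ} {f : Fin n → α}
    (h : ∀ j : Fin n, (hj : (j : ℕ) + 1 < n) → f j = f ⟨(j : ℕ) + 1, hj⟩) (i j : Fin n) :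
    f i = f j := by
  have eq_zero : ∀ m (hm : m < n), f ⟨m, hm⟩ = f ⟨0, by omega⟩ := by
    intro m
    induction m with
    | zero => intro _; rfl
    | succ m ih => intro hm; exact (h ⟨m, by omega⟩ hm).symm.trans (ih _)
  exact (eq_zero i i.2).trans (eq_zero j j.2).symm

lemma exists_pos_le_one_forall_le {ι : Type*} [Finite ι] {l : ι → ℝ} (hl : ∀ i, 0 < l i) :
    ∃ ε : ℝ, 0 < ε ∧ ε ≤ 1 ∧ ∀ i, ε ≤ l i := by
  have hε : ∀ᶠ ε in 𝓝[>] (0 : ℝ), 0 < ε ∧ ε ≤ 1 ∧ ∀ i, ε ≤ l i :=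
    eventually_mem_nhdsWithin.and <|
      ((eventually_le_nhds one_pos).and (eventually_all.2 fun i => eventually_le_nhds (hl i))
        ).filter_mono nhdsWithin_le_nhds
  exact hε.exists

lemma single_mem_probSimplex {n : ℕ} (j : Fin n) : Pi.single j 1 ∈ probSimplex n :=
  ⟨by simp, fun i => by by_cases h : i = j <;> simp [h]⟩

lemma const_inv_mem_probSimplex {n : ℕ} (hn : n ≠ 0) :
    (fun _ => (n : ℝ)⁻¹) ∈ probSimplex n :=
  ⟨by simp [hn], fun _ => by positivity⟩

lemma dotProduct_eq_of_mem_probSimplex {n : ℕ} {f x : Fin n → ℝ} {c : ℝ} (hf : ∀ j, f j = c)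
    (hx : x ∈ probSimplex n) : f ⬝ᵥ x = c := by
  simp only [dotProduct, hf, ← mul_sum, hx.1, mul_one]

lemma eq_of_isMaxOn_barycentre {n : ℕ} (hn : n ≠ 0) {f : Fin n → ℝ}
    (hmax : ∀ y ∈ probSimplex n, f ⬝ᵥ y ≤ f ⬝ᵥ fun _ => (n : ℝ)⁻¹) (j : Fin n) :
    f j = f ⬝ᵥ fun _ => (n : ℝ)⁻¹ := by
  set M := f ⬝ᵥ fun _ => (n : ℝ)⁻¹
  have hle : ∀ i, f i ≤ M := fun i => by
    simpa [dotProduct_single_one] using hmax _ (single_mem_probSimplex i)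
  have hsum : ∑ i, f i = ∑ _ : Fin n, M := by
    have : (n : ℝ) ≠ 0 := Nat.cast_ne_zero.2 hn
    simp [M, dotProduct, ← sum_mul]
    field_simp
  exact (sum_eq_sum_iff_of_le fun i _ => hle i).1 hsum j (mem_univ j)

theorem stmt13_general (n k : ℕ) (hn : 2 ≤ n) (C : Fin k → Fin n → ℝ)
    (hES : ∀ x ∈ probSimplex n, Efficient C x ↔
      ∃ l : Fin k → ℝ, (∀ i, 0 < l i) ∧ ∀ y ∈ probSimplex n,
        ∑ j, (∑ i, l i * C i j) * y j ≤ ∑ j, (∑ i, l i * C i j) * x j) :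
    (∀ x ∈ probSimplex n, Efficient C x) ↔
      ∃ ε : ℝ, ∃ l : Fin k → ℝ, 0 < ε ∧ ε ≤ 1 ∧ (∀ i, ε ≤ l i) ∧
        (∀ j : Fin n, (h : (j : ℕ) + 1 < n) →
          (∑ i, l i * C i j) = ∑ i, l i * C i ⟨(j : ℕ) + 1, h⟩) := by
  have hn0 : n ≠ 0 := by omega
  constructor
  · intro hall
    have hc := const_inv_mem_probSimplex hn0
    obtain ⟨l, hl, hmax⟩ := (hES _ hc).1 (hall _ hc)
    obtain ⟨ε, hε, hε1, hεl⟩ := exists_pos_le_one_forall_le hl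
    refine ⟨ε, l, hε, hε1, hεl, fun j hj => ?_⟩
    exact (eq_of_isMaxOn_barycentre hn0 (f := Matrix.vecMul l C) hmax j).trans
      (eq_of_isMaxOn_barycentre hn0 hmax _).symm
  · rintro ⟨ε, l, hε, -, hεl, hconst⟩ x hx
    have hf : ∀ j, Matrix.vecMul l C j = Matrix.vecMul l C ⟨0, by omega⟩ :=
      fun j => Fin.eq_of_forall_succ_eq hconst j _
    refine (hES x hx).2 ⟨l, fun i => hε.trans_le (hεl i), fun y hy => ?_⟩
    exact (dotProduct_eq_of_mem_probSimplex hf hy).trans_le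
      (dotProduct_eq_of_mem_probSimplex hf hx).ge

theorem stmt13 (n k : ℕ) (hn : 2 ≤ n) (hk : 2 ≤ k) (C : Fin k → Fin n → ℝ)
    (hES : ∀ x ∈ probSimplex n, Efficient C x ↔
      ∃ l : Fin k → ℝ, (∀ i, 0 < l i) ∧ ∀ y ∈ probSimplex n,
        ∑ j, (∑ i, l i * C i j) * y j ≤ ∑ j, (∑ i, l i * C i j) * x j) :
    (∀ x ∈ probSimplex n, Efficient C x) ↔
      ∃ ε : ℝ, ∃ l : Fin k → ℝ, 0 < ε ∧ ε ≤ 1 ∧ (∀ i, ε ≤ l i) ∧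
        (∀ j : Fin n, (h : (j : ℕ) + 1 < n) →
          (∑ i, l i * C i j) = ∑ i, l i * C i ⟨(j : ℕ) + 1, h⟩) :=
  stmt13_general n k hn C hES
end

section
/- Let k = 2 and suppose c_{1,j} ≠ c_{1,j+1} for all j = 1,...,n−1. If the ratios (c_{2,j+1} − c_{2,j})/(c_{1,j} − c_{1,j+1}) are all equal to a common positive value for j = 1,...,n−1, then every point of the probability simplex X is efficient for VMAX with criteria c_1, c_2. -/
open Finset

theorem stmt16 (n : ℕ) (hn : 2 ≤ n) (c₁ c₂ : Fin n → ℝ)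
    (hne : ∀ j : Fin n, (h : (j : ℕ) + 1 < n) → c₁ j ≠ c₁ ⟨(j : ℕ) + 1, h⟩)
    (hr : ∃ r : ℝ, 0 < r ∧ ∀ j : Fin n, (h : (j : ℕ) + 1 < n) →
      (c₂ ⟨(j : ℕ) + 1, h⟩ - c₂ j) / (c₁ j - c₁ ⟨(j : ℕ) + 1, h⟩) = r) :
    ∀ x ∈ probSimplex n,
      ¬ ∃ y ∈ probSimplex n,
        (∀ i : Fin 2, ∑ j, ![c₁, c₂] i j * x j ≤ ∑ j, ![c₁, c₂] i j * y j) ∧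
        ∃ i : Fin 2, ∑ j, ![c₁, c₂] i j * x j < ∑ j, ![c₁, c₂] i j * y j := by
  obtain ⟨r, hrpos, hrr⟩ := hr
  have h0 : 0 < n := by omega
  -- c₂ j + r * c₁ j is constant
  have hconst : ∀ m : ℕ, (hm : m < n) →
      c₂ ⟨m, hm⟩ + r * c₁ ⟨m, hm⟩ = c₂ ⟨0, h0⟩ + r * c₁ ⟨0, h0⟩ := by
    intro m
    induction m with
    | zero => intro hm; rfl
    | succ k ih =>
      intro hm
      have hk : k < n := by omega
      have hstep := hrr ⟨k, hk⟩ hm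
      have hne' := hne ⟨k, hk⟩ hm
      have hd : c₁ ⟨k, hk⟩ - c₁ ⟨k + 1, hm⟩ ≠ 0 := sub_ne_zero.mpr hne'
      rw [div_eq_iff hd] at hstep
      have := ih hk
      nlinarith [this, hstep]
  set K := c₂ ⟨0, h0⟩ + r * c₁ ⟨0, h0⟩ with hK
  have key : ∀ z : Fin n → ℝ, (∑ j, z j) = 1 →
      (∑ j, c₂ j * z j) + r * (∑ j, c₁ j * z j) = K := by
    intro z hz
    have : (∑ j, c₂ j * z j) + r * (∑ j, c₁ j * z j)
        = ∑ j, (c₂ j + r * c₁ j) * z j := by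
      rw [Finset.mul_sum, ← Finset.sum_add_distrib]
      congr 1; ext j; ring
    rw [this]
    have : ∀ j : Fin n, (c₂ j + r * c₁ j) * z j = K * z j := by
      intro j
      have := hconst j.1 j.2
      simp only [Fin.eta] at this
      rw [this]
    rw [Finset.sum_congr rfl fun j _ => this j, ← Finset.mul_sum, hz, mul_one]
  rintro x ⟨hx1, hx2⟩ ⟨y, ⟨hy1, hy2⟩, hle, i, hlt⟩
  have h1 := hle 0
  have h2 := hle 1
  simp only [Matrix.cons_val_zero, Matrix.cons_val_one, Matrix.head_cons] at h1 h2
  have kx := key x hx1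
  have ky := key y hy1
  have hstrict : (∑ j, c₂ j * x j) + r * (∑ j, c₁ j * x j)
      < (∑ j, c₂ j * y j) + r * (∑ j, c₁ j * y j) := by
    fin_cases i <;>
      simp only [Fin.mk_zero, Fin.mk_one, Matrix.cons_val_zero, Matrix.cons_val_one,
        Matrix.head_cons] at hlt <;>
      nlinarith
  rw [kx, ky] at hstrict
  exact lt_irrefl _ hstrict
end
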